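/- arXiv:1705.02379 — 2 statements merged into one kernel-verified Lean document; each statement's English description precedes it below -/
import Mathlib

section
/- Adding to a graph G a disjoint copy of the 2-chimney Ch_2 and identifying a single vertex v of G with one vertex of the Ch_2 preserves bowtie-freeness: if G is bowtie-free then the resulting graph is bowtie-free, provided v is not contained in any triangle of G. -/
/-!
A chimney vertex other than `v` is adjacent only to chimney vertices, and a triangle through `v`
stays in the chimney because `v` lies in no triangle of `G`; so every triangle meeting the chimney
lies inside it. A bowtie centred in the chimney would thus put five distinct vertices into a
four-element set. A bowtie centred at a vertex of `G` other than `v` has all its vertices adjacent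
to that centre, hence in `G`, so it is a bowtie of `G`.
-/

/-- The bowtie graph: two triangles {0,1,2} and {2,3,4} sharing exactly the vertex 2. -/
def bowtie : SimpleGraph (Fin 5) :=
  SimpleGraph.fromRel (fun a b =>
    ((a : ℕ), (b : ℕ)) ∈ ({(0,1),(0,2),(1,2),(2,3),(2,4),(3,4)} : Set (ℕ × ℕ)))

/-- A graph is bowtie-free if there is no monomorphism from the bowtie into it. -/
def BowtieFree {V : Type} (G : SimpleGraph V) : Prop :=
  ¬∃ f : Fin 5 → V, Function.Injective f ∧ ∀ a b, bowtie.Adj a b → G.Adj (f a) (f b)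

open Set

lemma bowtie_adj_two {i : Fin 5} (hi : i ≠ 2) : bowtie.Adj 2 i := by
  fin_cases i <;> simp_all [bowtie, SimpleGraph.fromRel_adj]

lemma exists_bowtie_adj_two_and_adj {i : Fin 5} (hi : i ≠ 2) :
    ∃ j, bowtie.Adj 2 j ∧ bowtie.Adj i j := by
  fin_cases i
  · exact ⟨1, by simp [bowtie, SimpleGraph.fromRel_adj]⟩
  · exact ⟨0, by simp [bowtie, SimpleGraph.fromRel_adj]⟩
  · exact absurd rfl hi
  · exact ⟨4, by simp [bowtie, SimpleGraph.fromRel_adj]⟩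
  · exact ⟨3, by simp [bowtie, SimpleGraph.fromRel_adj]⟩

/-- `G` with a chimney glued at `v`; the fresh vertices `Sum.inr 0, Sum.inr 1, Sum.inr 2` are
`b, c, d` of `Ch₂`, and `v` plays the role of `a`. -/
def glue {V : Type} (G : SimpleGraph V) (v : V) : SimpleGraph (V ⊕ Fin 3) :=
  SimpleGraph.fromRel (fun a b : V ⊕ Fin 3 =>
      (∃ x y, a = Sum.inl x ∧ b = Sum.inl y ∧ G.Adj x y) ∨
      (a = Sum.inl v ∧ ∃ i, b = Sum.inr i) ∨
      (a = Sum.inr 0 ∧ (b = Sum.inr 1 ∨ b = Sum.inr 2)))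

def chimney {V : Type} (v : V) : Set (V ⊕ Fin 3) :=
  insert (Sum.inl v) (range Sum.inr)

section Glue

variable {V : Type} {G : SimpleGraph V} {v : V}

lemma glue_adj_inl_inl {x y : V} : (glue G v).Adj (Sum.inl x) (Sum.inl y) ↔ G.Adj x y := by
  simp only [glue, SimpleGraph.fromRel_adj, ne_eq, Sum.inl.injEq, reduceCtorEq,
    exists_false, and_false, or_false, exists_and_left, exists_eq_left']
  exact ⟨fun ⟨_, h⟩ => h.elim id .symm, fun h => ⟨h.ne, Or.inl h⟩⟩

lemma exists_inl_of_glue_adj_inl {p : V ⊕ Fin 3} {y : V} (hy : y ≠ v)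
    (h : (glue G v).Adj p (Sum.inl y)) : ∃ x, p = Sum.inl x ∧ G.Adj x y := by
  rcases p with x | j
  · exact ⟨x, rfl, glue_adj_inl_inl.mp h⟩
  · simp [glue, SimpleGraph.fromRel_adj, hy] at h

lemma inl_mem_chimney_iff {x : V} : Sum.inl x ∈ chimney v ↔ x = v := by
  simp [chimney]

lemma encard_chimney_le : (chimney v).encard ≤ 4 :=
  calc (chimney v).encard ≤ (range (Sum.inr : Fin 3 → V ⊕ Fin 3)).encard + 1 :=
        encard_insert_le _ _
    _ ≤ (univ : Set (Fin 3)).encard + 1 := by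
        gcongr
        rw [← image_univ]
        exact encard_image_le _ _
    _ = 4 := by norm_num

lemma mem_chimney_of_adj_of_adj (hv : ¬∃ x y, G.Adj v x ∧ G.Adj v y ∧ G.Adj x y)
    {p q r : V ⊕ Fin 3} (hp : p ∈ chimney v) (hpq : (glue G v).Adj p q)
    (hpr : (glue G v).Adj p r) (hqr : (glue G v).Adj q r) : q ∈ chimney v := by
  by_contra hq
  obtain ⟨y, rfl⟩ : ∃ y, q = Sum.inl y := by
    rcases q with y | j
    · exact ⟨y, rfl⟩
    · exact absurd (mem_insert_of_mem _ (mem_range_self j)) hq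
  have hyv : y ≠ v := fun h => hq (inl_mem_chimney_iff.mpr h)
  obtain ⟨x, rfl, hxy⟩ := exists_inl_of_glue_adj_inl hyv hpq
  obtain rfl := inl_mem_chimney_iff.mp hp
  obtain ⟨z, rfl, hzy⟩ := exists_inl_of_glue_adj_inl hyv hqr.symm
  exact hv ⟨y, z, hxy, glue_adj_inl_inl.mp hpr, hzy.symm⟩

end Glue

/-- Gluing a fresh copy of the 2-chimney `Ch₂` (vertices `a,b,c,d`, edges
`ab, ac, bc, ad, bd`) onto a bowtie-free graph `G` by identifying `a` with a vertex `v`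
of `G` lying in no triangle preserves bowtie-freeness.  The three fresh vertices are
`Sum.inr 0 = b`, `Sum.inr 1 = c`, `Sum.inr 2 = d`. -/
theorem stmt2 {V : Type} (G : SimpleGraph V) (hG : BowtieFree G) (v : V)
    (hv : ¬∃ x y, G.Adj v x ∧ G.Adj v y ∧ G.Adj x y) :
    BowtieFree (SimpleGraph.fromRel (fun a b : V ⊕ Fin 3 =>
      (∃ x y, a = Sum.inl x ∧ b = Sum.inl y ∧ G.Adj x y) ∨
      (a = Sum.inl v ∧ ∃ i, b = Sum.inr i) ∨
      (a = Sum.inr 0 ∧ (b = Sum.inr 1 ∨ b = Sum.inr 2)))) := by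
  change BowtieFree (glue G v)
  rintro ⟨f, hf, hom⟩
  by_cases hcentre : f 2 ∈ chimney v
  · have hrange : range f ⊆ chimney v := by
      rintro _ ⟨i, rfl⟩
      by_cases hi : i = 2
      · exact hi ▸ hcentre
      obtain ⟨j, h2j, hij⟩ := exists_bowtie_adj_two_and_adj hi
      exact mem_chimney_of_adj_of_adj hv hcentre (hom _ _ (bowtie_adj_two hi)) (hom _ _ h2j)
        (hom _ _ hij)
    have : (5 : ℕ∞) ≤ 4 := by
      simpa using hf.encard_range.trans ((encard_le_encard hrange).trans encard_chimney_le)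
    exact absurd this (by decide)
  · obtain ⟨x, hx, hxv⟩ : ∃ x, f 2 = Sum.inl x ∧ x ≠ v := by
      rcases h : f 2 with x | j
      · exact ⟨x, rfl, fun hxv => hcentre (h ▸ inl_mem_chimney_iff.mpr hxv)⟩
      · exact absurd (h ▸ mem_insert_of_mem _ (mem_range_self j)) hcentre
    have hleft : ∀ i, ∃ y, f i = Sum.inl y := fun i => by
      by_cases hi : i = 2
      · exact ⟨x, hi ▸ hx⟩
      obtain ⟨y, hy, -⟩ := exists_inl_of_glue_adj_inl hxv
        (hx ▸ (hom _ _ (bowtie_adj_two hi)).symm)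
      exact ⟨y, hy⟩
    choose g hg using hleft
    refine hG ⟨g, fun i j hij => hf (by rw [hg, hg, hij]), fun a b hab => ?_⟩
    exact glue_adj_inl_inl.mp (hg a ▸ hg b ▸ hom a b hab)
end

section
/- Partite Lemma with relations and functions: Let L be a language with relations and partial functions, A a finite L-structure, and B a finite A-partite L-system. Then there exists a finite A-partite L-system C such that for every 2-colouring of the copies of A in C (as A-partite subsystems) there is a part-preserving copy of B in C on which all copies of A have the same colour. Moreover, if every irreducible subsystem of B is transversal, then C can be chosen so that every irreducible subsystem of C is transversal. -/
/-!
Take `C` to be a Hales–Jewett power of `B`: its vertices are `N`-tuples of vertices of `B` lying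
in a single part, with relations and function values taken coordinatewise. A point of the cube
`(copies of A in B)^N` is a copy of `A` in the power, and a combinatorial line `l` yields an
embedding of `B` into the power whose coordinates are the identity where `l` moves and the
retraction `v ↦ g (part v)` onto the copy `g` where `l` is fixed to `g`; it sends each copy `g` of
`A` in `B` to the point `l g`. Hence a monochromatic line gives a copy of `B` on which all copies
of `A` have one colour. For transversality, an irreducible subsystem of the power projects in each
coordinate onto a set whose closure in `B` is irreducible, since a splitting of that closure pulls
back to a splitting of the subsystem.
-/

/-- A language with relation symbols and partial function symbols; functions have a
domain arity and a range arity (values are sets of `fnRng F` vertices). -/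
structure PLang where
  Rel : Type
  relAr : Rel → ℕ
  Fn : Type
  fnDom : Fn → ℕ
  fnRng : Fn → ℕ

/-- A structure for a language with relations and partial functions: each function symbol
is interpreted as a partial map from `fnDom`-tuples to (unordered) sets of vertices,
`none` meaning "undefined". -/
structure PStruc (L : PLang) (V : Type) where
  rel : ∀ R : L.Rel, Set ((Fin (L.relAr R)) → V)
  fn : ∀ F : L.Fn, ((Fin (L.fnDom F)) → V) → Option (Set V)

/-- `S` is (the vertex set of) a substructure of `A`: it is closed under all partial
functions of `A`. -/
def PStruc.ClosedIn {L : PLang} {V : Type} (A : PStruc L V) (S : Set V) : Prop :=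
  ∀ (F : L.Fn) (t : Fin (L.fnDom F) → V), (∀ i, t i ∈ S) →
    ∀ s : Set V, A.fn F t = some s → s ⊆ S

/-- The closure of `B` in `A`: the smallest substructure of `A` containing `B`. -/
def PStruc.Cl {L : PLang} {V : Type} (A : PStruc L V) (B : Set V) : Set V :=
  ⋂₀ {S : Set V | A.ClosedIn S ∧ B ⊆ S}

/-- An embedding of structures with relations and partial functions: injective, preserves
and reflects relations, preserves and reflects function domains, and commutes with
function values. -/
def IsEmb {L : PLang} {α β : Type} (A : PStruc L α) (B : PStruc L β) (f : α → β) : Prop :=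
  Function.Injective f ∧
  (∀ (R : L.Rel) (t : Fin (L.relAr R) → α),
    t ∈ A.rel R ↔ (fun i => f (t i)) ∈ B.rel R) ∧
  (∀ (F : L.Fn) (t : Fin (L.fnDom F) → α),
    ((A.fn F t).isSome ↔ (B.fn F (fun i => f (t i))).isSome) ∧
    (∀ s, A.fn F t = some s → B.fn F (fun i => f (t i)) = some (f '' s)))

/-- `C`, with embeddings `β1, β2`, is a free amalgam of `B1` and `B2` over `A`
(with respect to the embeddings `α1 : A → B1`, `α2 : A → B2`): the two copies meet
exactly in the copy of `A`, they cover `C`, and no relational tuple or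
function-domain tuple of `C` uses vertices of both sides. -/
def IsFreeAmalgam {L : PLang} {a b1 b2 c : ℕ} (_A : PStruc L (Fin a))
    (B1 : PStruc L (Fin b1)) (B2 : PStruc L (Fin b2)) (C : PStruc L (Fin c))
    (α1 : Fin a → Fin b1) (α2 : Fin a → Fin b2)
    (β1 : Fin b1 → Fin c) (β2 : Fin b2 → Fin c) : Prop :=
  IsEmb B1 C β1 ∧ IsEmb B2 C β2 ∧ (∀ x, β1 (α1 x) = β2 (α2 x)) ∧
  (∀ x1 x2, β1 x1 = β2 x2 → ∃ x, x1 = α1 x ∧ x2 = α2 x) ∧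
  (∀ z, z ∈ Set.range β1 ∪ Set.range β2) ∧
  (∀ (R : L.Rel) (t : Fin (L.relAr R) → Fin c), t ∈ C.rel R →
    (∀ i, t i ∈ Set.range β1) ∨ (∀ i, t i ∈ Set.range β2)) ∧
  (∀ (F : L.Fn) (t : Fin (L.fnDom F) → Fin c), (C.fn F t).isSome →
    (∀ i, t i ∈ Set.range β1) ∨ (∀ i, t i ∈ Set.range β2))

/-- A free amalgamation class of finite structures: hereditary (closed under substructures
up to isomorphism), joint embedding, and free amalgamation. -/
def FreeAmalgClass {L : PLang} (K : ∀ n : ℕ, PStruc L (Fin n) → Prop) : Prop :=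
  (∀ n A, K n A → ∀ (m : ℕ) (B : PStruc L (Fin m)) (f : Fin m → Fin n),
    IsEmb B A f → K m B) ∧
  (∀ n A m B, K n A → K m B →
    ∃ (p : ℕ) (C : PStruc L (Fin p)) (f : Fin n → Fin p) (g : Fin m → Fin p),
      K p C ∧ IsEmb A C f ∧ IsEmb B C g) ∧
  (∀ (a : ℕ) (A : PStruc L (Fin a)) (b1 : ℕ) (B1 : PStruc L (Fin b1))
      (b2 : ℕ) (B2 : PStruc L (Fin b2)) (α1 : Fin a → Fin b1) (α2 : Fin a → Fin b2),
    K a A → K b1 B1 → K b2 B2 → IsEmb A B1 α1 → IsEmb A B2 α2 →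
    ∃ (c : ℕ) (C : PStruc L (Fin c)) (β1 : Fin b1 → Fin c) (β2 : Fin b2 → Fin c),
      K c C ∧ IsFreeAmalgam A B1 B2 C α1 α2 β1 β2)

/-- An order-preserving embedding between linearly ordered structures. -/
def OrdEmb {L : PLang} {α β : Type} (A : PStruc L α) (rA : α → α → Prop)
    (B : PStruc L β) (rB : β → β → Prop) (f : α → β) : Prop :=
  IsEmb A B f ∧ ∀ x y, rA x y → rB (f x) (f y)

/-- An `A`-partite `L`-system over a structure `A` with vertex set `Fin a`: a structure
`str` with a projection `part` onto `A` which is a homomorphism, and such that every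
relational tuple, and every function-domain tuple together with its value, is transversal
(meets each part in at most one vertex). -/
structure Partite {L : PLang} {a : ℕ} (A : PStruc L (Fin a)) (β : Type) where
  str : PStruc L β
  part : β → Fin a
  hom_rel : ∀ (R : L.Rel) (t : Fin (L.relAr R) → β),
    t ∈ str.rel R → (fun i => part (t i)) ∈ A.rel R
  hom_fn : ∀ (F : L.Fn) (t : Fin (L.fnDom F) → β) (s : Set β),
    str.fn F t = some s → A.fn F (fun i => part (t i)) = some (part '' s)
  trans_rel : ∀ (R : L.Rel) (t : Fin (L.relAr R) → β), t ∈ str.rel R →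
    ∀ i j, part (t i) = part (t j) → t i = t j
  trans_fn : ∀ (F : L.Fn) (t : Fin (L.fnDom F) → β) (s : Set β), str.fn F t = some s →
    (∀ i j, part (t i) = part (t j) → t i = t j) ∧
    (∀ x ∈ s, ∀ i, part x = part (t i) → x = t i) ∧
    (∀ x ∈ s, ∀ y ∈ s, part x = part y → x = y)

/-- Vertices of the `N`-th power of the partite system `B`: functions `Fin N → β`
taking values in a single part of `B`. -/
def PowV {L : PLang} {a : ℕ} {A : PStruc L (Fin a)} {β : Type}
    (B : Partite A β) (N : ℕ) : Type :=
  {f : Fin N → β // ∀ i j, B.part (f i) = B.part (f j)}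

/-- The power structure: relations hold coordinatewise, and a function value is defined
iff it is defined at every coordinate, in which case it is the set of part-consistent
coordinatewise selectors of the coordinate values. -/
def powStr {L : PLang} {a : ℕ} {A : PStruc L (Fin a)} {β : Type}
    (B : Partite A β) (N : ℕ) : PStruc L (PowV B N) where
  rel R := {t | ∀ i : Fin N, (fun j => (t j).1 i) ∈ B.str.rel R}
  fn F t :=
    if h : ∀ i : Fin N, (B.str.fn F (fun j => (t j).1 i)).isSome then
      some {g : PowV B N | ∀ i : Fin N, g.1 i ∈ (B.str.fn F (fun j => (t j).1 i)).get (h i)}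
    else none

/-- The projection of the power system to the parts of `A` (requires `0 < N`). -/
def powPart {L : PLang} {a : ℕ} {A : PStruc L (Fin a)} {β : Type}
    (B : Partite A β) (N : ℕ) (hN : 0 < N) : PowV B N → Fin a :=
  fun g => B.part (g.1 ⟨0, hN⟩)

/-- The closed set `S` carries an irreducible substructure of `D`: it cannot be written
as a free amalgamation of two proper substructures (two proper closed subsets covering
`S` such that no relational or function-domain tuple of `D` inside `S` meets both
parts outside the intersection). -/
def IrredSub {L : PLang} {V : Type} (D : PStruc L V) (S : Set V) : Prop :=
  D.ClosedIn S ∧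
  ¬∃ S1 S2 : Set V, S1 ⊆ S ∧ S2 ⊆ S ∧ S1 ≠ S ∧ S2 ≠ S ∧ S1 ∪ S2 = S ∧
    D.ClosedIn S1 ∧ D.ClosedIn S2 ∧
    (∀ (R : L.Rel) (t : Fin (L.relAr R) → V), t ∈ D.rel R → (∀ i, t i ∈ S) →
      ((∀ i, t i ∈ S1) ∨ (∀ i, t i ∈ S2))) ∧
    (∀ (F : L.Fn) (t : Fin (L.fnDom F) → V), (D.fn F t).isSome → (∀ i, t i ∈ S) →
      ((∀ i, t i ∈ S1) ∨ (∀ i, t i ∈ S2)))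

/-- A partite copy of `A` in the partite system `B`: an embedding of structures which is
a section of the projection. -/
def PartiteCopy {L : PLang} {a : ℕ} (A : PStruc L (Fin a)) {β : Type}
    (B : Partite A β) (g : Fin a → β) : Prop :=
  IsEmb A B.str g ∧ ∀ p, B.part (g p) = p

/-- A part-preserving embedding of `A`-partite systems. -/
def PartiteEmb {L : PLang} {a : ℕ} {A : PStruc L (Fin a)} {β γ : Type}
    (B : Partite A β) (C : Partite A γ) (e : β → γ) : Prop :=
  IsEmb B.str C.str e ∧ ∀ v, C.part (e v) = B.part v

namespace PStruc

variable {L : PLang} {V : Type} (D : PStruc L V)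

lemma closedIn_cl (X : Set V) : D.ClosedIn (D.Cl X) :=
  fun F t ht s hs _ hz =>
    Set.mem_sInter.mpr fun S hS => hS.1 F t (fun j => Set.mem_sInter.mp (ht j) S hS) s hs hz

lemma subset_cl (X : Set V) : X ⊆ D.Cl X :=
  fun _ hz => Set.mem_sInter.mpr fun _ hS => hS.2 hz

variable {D}

lemma cl_subset {X S : Set V} (hS : D.ClosedIn S) (hXS : X ⊆ S) : D.Cl X ⊆ S :=
  fun _ hz => Set.mem_sInter.mp hz S ⟨hS, hXS⟩

lemma ClosedIn.inter {S T : Set V} (hS : D.ClosedIn S) (hT : D.ClosedIn T) :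
    D.ClosedIn (S ∩ T) :=
  fun F t ht s hs => Set.subset_inter (hS F t (fun j => (ht j).1) s hs)
    (hT F t (fun j => (ht j).2) s hs)

end PStruc

namespace Combinatorics.Line

theorem exists_mono_in_high_dimension_fin (α : Type*) [Finite α] (κ : Type*) [Finite κ]
    [Nonempty κ] :
    ∃ N, 0 < N ∧ ∀ C : (Fin N → α) → κ, ∃ l : Line α (Fin N), l.IsMono C := by
  obtain ⟨ι, _, hι⟩ := Line.exists_mono_in_high_dimension α κ
  let e := Fintype.equivFin ι
  have hN : ∀ C : (Fin (Fintype.card ι) → α) → κ, ∃ l : Line α (Fin (Fintype.card ι)),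
      l.IsMono C := fun C => by
    obtain ⟨l, c, hc⟩ := hι fun x => C (x ∘ e.symm)
    exact ⟨⟨l.idxFun ∘ e.symm, l.proper.imp' e fun i hi => by simpa using hi⟩, c, hc⟩
  obtain ⟨l, -⟩ := hN fun _ => Classical.arbitrary κ
  exact ⟨_, Fin.pos_iff_nonempty.mpr ⟨l.proper.choose⟩, hN⟩

end Combinatorics.Line

section Power

variable {L : PLang} {a : ℕ} {A : PStruc L (Fin a)} {β : Type} {B : Partite A β} {N : ℕ}

instance [Fintype β] : Fintype (PowV B N) :=
  inferInstanceAs (Fintype {f : Fin N → β // ∀ i j, B.part (f i) = B.part (f j)})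

lemma powStr_fn_isSome_iff {F : L.Fn} {t : Fin (L.fnDom F) → PowV B N} :
    ((powStr B N).fn F t).isSome ↔ ∀ i, (B.str.fn F (fun j => (t j).1 i)).isSome := by
  dsimp only [powStr]
  split_ifs with h <;> simp [h]

lemma powStr_fn_eq_some_iff {F : L.Fn} {t : Fin (L.fnDom F) → PowV B N} {s : Set (PowV B N)} :
    (powStr B N).fn F t = some s ↔ ∃ S : Fin N → Set β,
      (∀ i, B.str.fn F (fun j => (t j).1 i) = some (S i)) ∧ s = {g | ∀ i, g.1 i ∈ S i} := by
  dsimp only [powStr]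
  split_ifs with h
  · refine ⟨fun hs => ⟨_, fun i => (Option.some_get (h i)).symm, (Option.some.inj hs).symm⟩,
      ?_⟩
    rintro ⟨S, hS, rfl⟩
    simp_rw [hS, Option.get_some]
  · simp only [false_iff, not_exists, not_and]
    intro S hS
    exact absurd (fun i => by simp [hS i]) h

lemma PowV.part_apply (g : PowV B N) (hN : 0 < N) (i : Fin N) :
    B.part (g.1 i) = powPart B N hN g :=
  g.2 i _

lemma powStr_fn_part_image {F : L.Fn} {t : Fin (L.fnDom F) → PowV B N} {s : Set (PowV B N)}
    (hN : 0 < N) (hs : (powStr B N).fn F t = some s) :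
    A.fn F (fun j => powPart B N hN (t j)) = some (powPart B N hN '' s) := by
  obtain ⟨S, hS, rfl⟩ := powStr_fn_eq_some_iff.mp hs
  have hA : ∀ i, A.fn F (fun j => powPart B N hN (t j)) = some (B.part '' S i) := fun i => by
    simpa only [PowV.part_apply _ hN] using B.hom_fn F _ _ (hS i)
  rw [hA ⟨0, hN⟩]
  congr 1
  ext x
  constructor
  · rintro ⟨x, hx, rfl⟩
    have hx : ∀ i, ∃ y ∈ S i, B.part y = B.part x := fun i => by
      rw [← Set.mem_image, Option.some.inj ((hA i).symm.trans (hA ⟨0, hN⟩))]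
      exact Set.mem_image_of_mem _ hx
    choose y hy hyx using hx
    exact ⟨⟨y, fun i j => (hyx i).trans (hyx j).symm⟩, hy, hyx _⟩
  · rintro ⟨g, hg, rfl⟩
    exact ⟨g.1 _, hg _, rfl⟩

variable (B N) in
def powPartite (hN : 0 < N) : Partite A (PowV B N) where
  str := powStr B N
  part := powPart B N hN
  hom_rel R t ht := B.hom_rel R _ (ht ⟨0, hN⟩)
  hom_fn _ _ _ := powStr_fn_part_image hN
  trans_rel R t ht j₁ j₂ h := Subtype.ext <| funext fun i =>
    B.trans_rel R _ (ht i) j₁ j₂ <| by simpa only [PowV.part_apply _ hN] using h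
  trans_fn F t s hs := by
    obtain ⟨S, hS, rfl⟩ := powStr_fn_eq_some_iff.mp hs
    have hB := fun i => B.trans_fn F _ _ (hS i)
    refine ⟨fun j₁ j₂ h => ?_, fun x hx j h => ?_, fun x hx y hy h => ?_⟩ <;>
      refine Subtype.ext <| funext fun i => ?_
    · exact (hB i).1 j₁ j₂ (by simpa only [PowV.part_apply _ hN] using h)
    · exact (hB i).2.1 _ (hx i) j (by simpa only [PowV.part_apply _ hN] using h)
    · exact (hB i).2.2 _ (hx i) _ (hy i) (by simpa only [PowV.part_apply _ hN] using h)

end Power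

section Lift

variable {L : PLang} {a : ℕ} {A : PStruc L (Fin a)} {β γ : Type}

structure PartiteHom (B : Partite A β) (C : Partite A γ) (φ : β → γ) : Prop where
  part_map : ∀ v, C.part (φ v) = B.part v
  map_rel : ∀ (R : L.Rel) (t : Fin (L.relAr R) → β),
    t ∈ B.str.rel R → (fun i => φ (t i)) ∈ C.str.rel R
  map_fn : ∀ (F : L.Fn) (t : Fin (L.fnDom F) → β) (s : Set β),
    B.str.fn F t = some s → C.str.fn F (fun i => φ (t i)) = some (φ '' s)

variable {B : Partite A β} {N : ℕ}

lemma PartiteHom.id : PartiteHom B B id :=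
  ⟨fun _ => rfl, fun _ _ ht => ht, fun _ _ _ hs => by rwa [Set.image_id]⟩

lemma PartiteCopy.partiteHom_comp_part {g : Fin a → β} (hg : PartiteCopy A B g) :
    PartiteHom B B (fun v => g (B.part v)) :=
  ⟨fun _ => hg.2 _, fun R t ht => (hg.1.2.1 R _).mp (B.hom_rel R t ht),
    fun F t s hs => by rw [(hg.1.2.2 F _).2 _ (B.hom_fn F t s hs), Set.image_image]⟩

def powLift (φ : Fin N → β → β) (hφ : ∀ i, PartiteHom B B (φ i)) (v : β) : PowV B N :=
  ⟨fun i => φ i v, fun i j => ((hφ i).part_map v).trans ((hφ j).part_map v).symm⟩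

variable {φ : Fin N → β → β} {hφ : ∀ i, PartiteHom B B (φ i)}

lemma powStr_fn_powLift {F : L.Fn} {t : Fin (L.fnDom F) → β} {s : Set β}
    (hs : B.str.fn F t = some s) :
    (powStr B N).fn F (fun j => powLift φ hφ (t j)) = some {g | ∀ i, g.1 i ∈ φ i '' s} :=
  powStr_fn_eq_some_iff.mpr ⟨_, fun i => (hφ i).map_fn F t s hs, rfl⟩

lemma isEmb_powLift {i₀ : Fin N} (hi₀ : φ i₀ = id) :
    IsEmb B.str (powStr B N) (powLift φ hφ) := by
  refine ⟨fun v w h => ?_, fun R t => ⟨fun ht i => (hφ i).map_rel R t ht, fun ht => ?_⟩,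
    fun F t => ⟨⟨fun h => ?_, fun h => ?_⟩, fun s hs => ?_⟩⟩
  · simpa only [powLift, hi₀, id] using congrArg (·.1 i₀) h
  · simpa only [powLift, hi₀, id] using ht i₀
  · obtain ⟨s, hs⟩ := Option.isSome_iff_exists.mp h
    rw [powStr_fn_powLift hs]
    rfl
  · simpa only [powLift, hi₀, id] using powStr_fn_isSome_iff.mp h i₀
  rw [powStr_fn_powLift hs]
  congr 1
  ext g
  refine ⟨fun hg => ?_, by rintro ⟨x, hx, rfl⟩ i; exact ⟨x, hx, rfl⟩⟩
  obtain ⟨x, hx, hxg⟩ := hg i₀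
  rw [hi₀, id] at hxg
  refine ⟨x, hx, Subtype.ext <| funext fun i => ?_⟩
  obtain ⟨y, hy, hyg⟩ := hg i
  -- `s` meets each part at most once, and `y` lies in the part of `x`
  have hyx : y = x := (B.trans_fn F t s hs).2.2 y hy x hx <| by
    rw [← (hφ i).part_map y, hyg, g.2 i i₀, ← hxg]
  rw [← hyg, hyx]
  rfl

lemma partiteEmb_powLift (hN : 0 < N) {i₀ : Fin N} (hi₀ : φ i₀ = id) :
    PartiteEmb B (powPartite B N hN) (powLift φ hφ) :=
  ⟨isEmb_powLift hi₀, fun v => (hφ _).part_map v⟩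

end Lift

section Lines

open Combinatorics

variable {L : PLang} {a : ℕ} {A : PStruc L (Fin a)} {β : Type} {B : Partite A β} {N : ℕ}

variable (A) in
abbrev PartiteCopies (B : Partite A β) : Type := {g : Fin a → β // PartiteCopy A B g}

def PowV.ofCopies (f : Fin N → PartiteCopies A B) (p : Fin a) : PowV B N :=
  ⟨fun i => (f i).1 p, fun i j => ((f i).2.2 p).trans ((f j).2.2 p).symm⟩

def lineCoord (l : Line (PartiteCopies A B) (Fin N)) (i : Fin N) (v : β) : β :=
  (l.idxFun i).elim v fun g => g.1 (B.part v)

lemma partiteHom_lineCoord (l : Line (PartiteCopies A B) (Fin N)) (i : Fin N) :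
    PartiteHom B B (lineCoord l i) := by
  unfold lineCoord
  cases l.idxFun i with
  | none => exact PartiteHom.id
  | some g => exact g.2.partiteHom_comp_part

lemma powLift_lineCoord_comp_copy (l : Line (PartiteCopies A B) (Fin N))
    {g : Fin a → β} (hg : PartiteCopy A B g) :
    (fun p => powLift (lineCoord l) (partiteHom_lineCoord l) (g p)) =
      PowV.ofCopies (l ⟨g, hg⟩) := by
  funext p
  refine Subtype.ext <| funext fun i => ?_
  cases h : l.idxFun i <;> simp [powLift, lineCoord, PowV.ofCopies, h, hg.2 p]

theorem exists_partiteEmb_const_on_copies (hN : 0 < N) {κ : Type*}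
    {χ : (Fin a → PowV B N) → κ}
    {l : Line (PartiteCopies A B) (Fin N)}
    (hl : l.IsMono fun f => χ (PowV.ofCopies f)) :
    ∃ e : β → PowV B N, PartiteEmb B (powPartite B N hN) e ∧
      ∀ g₁ g₂ : Fin a → β, PartiteCopy A B g₁ → PartiteCopy A B g₂ →
        χ (fun p => e (g₁ p)) = χ (fun p => e (g₂ p)) := by
  obtain ⟨c, hc⟩ := hl
  obtain ⟨i₀, hi₀⟩ := l.proper
  have hid : lineCoord l i₀ = id := funext fun v => by simp [lineCoord, hi₀]
  refine ⟨_, partiteEmb_powLift (hφ := partiteHom_lineCoord l) hN hid,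
    fun g₁ g₂ hg₁ hg₂ => ?_⟩
  rw [powLift_lineCoord_comp_copy l hg₁, powLift_lineCoord_comp_copy l hg₂]
  exact (hc _).trans (hc _).symm

end Lines

section Irreducible

variable {L : PLang} {a : ℕ} {A : PStruc L (Fin a)} {β : Type} {B : Partite A β} {N : ℕ}

lemma closedIn_powStr_preimage {X : Set β} (hX : B.str.ClosedIn X) (i : Fin N) :
    (powStr B N).ClosedIn {g | g.1 i ∈ X} := by
  intro F t ht s hs g hg
  obtain ⟨S, hS, rfl⟩ := powStr_fn_eq_some_iff.mp hs
  exact hX F _ ht _ (hS i) (hg i)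

lemma irredSub_cl_image_coord {S : Set (PowV B N)} (hS : IrredSub (powStr B N) S) (i : Fin N) :
    IrredSub B.str (B.str.Cl ((fun g => g.1 i) '' S)) := by
  set T := B.str.Cl ((fun g => g.1 i) '' S)
  refine ⟨B.str.closedIn_cl _, ?_⟩
  rintro ⟨X₁, X₂, hX₁, hX₂, hne₁, hne₂, hunion, hc₁, hc₂, hrel, hfn⟩
  have hmem : ∀ g ∈ S, g.1 i ∈ T := fun g hg => B.str.subset_cl _ ⟨g, hg, rfl⟩
  have hproper : ∀ X ⊆ T, X ≠ T → B.str.ClosedIn X → S ∩ {g | g.1 i ∈ X} ≠ S := by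
    intro X hX hne hc heq
    refine hne (hX.antisymm (PStruc.cl_subset hc ?_))
    rintro _ ⟨g, hg, rfl⟩
    exact (heq.symm ▸ hg : g ∈ S ∩ {g | g.1 i ∈ X}).2
  refine hS.2 ⟨S ∩ {g | g.1 i ∈ X₁}, S ∩ {g | g.1 i ∈ X₂}, Set.inter_subset_left,
    Set.inter_subset_left, hproper X₁ hX₁ hne₁ hc₁, hproper X₂ hX₂ hne₂ hc₂, ?_,
    hS.1.inter (closedIn_powStr_preimage hc₁ i), hS.1.inter (closedIn_powStr_preimage hc₂ i),
    fun R t ht hts => ?_, fun F t ht hts => ?_⟩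
  · rw [← Set.inter_union_distrib_left]
    refine Set.inter_eq_left.mpr fun g hg => ?_
    exact (hunion ▸ hmem g hg : g.1 i ∈ X₁ ∪ X₂)
  · rcases hrel R _ (ht i) (fun j => hmem _ (hts j)) with h | h
    exacts [.inl fun j => ⟨hts j, h j⟩, .inr fun j => ⟨hts j, h j⟩]
  · rcases hfn F _ (powStr_fn_isSome_iff.mp ht i) (fun j => hmem _ (hts j)) with h | h
    exacts [.inl fun j => ⟨hts j, h j⟩, .inr fun j => ⟨hts j, h j⟩]

theorem injOn_powPart_of_irredSub (hB : ∀ S : Set β, IrredSub B.str S → Set.InjOn B.part S)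
    (hN : 0 < N) {S : Set (PowV B N)} (hS : IrredSub (powStr B N) S) :
    Set.InjOn (powPart B N hN) S := by
  intro u hu v hv huv
  refine Subtype.ext <| funext fun i => hB _ (irredSub_cl_image_coord hS i)
    (B.str.subset_cl _ ⟨u, hu, rfl⟩) (B.str.subset_cl _ ⟨v, hv, rfl⟩) ?_
  rw [PowV.part_apply u hN, PowV.part_apply v hN]
  exact huv

end Irreducible

/-- Partite Lemma with relations and functions: for every finite structure `A` and finite
`A`-partite system `B` there is a finite `A`-partite system `C` such that every
2-colouring of the partite copies of `A` in `C` admits a partite copy of `B` in `C` on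
which all copies of `A` get the same colour; moreover, if every irreducible subsystem of
`B` is transversal then `C` can be chosen so that every irreducible subsystem of `C` is
transversal. -/
theorem stmt11 {L : PLang} {a : ℕ} (A : PStruc L (Fin a)) {β : Type} [Fintype β]
    (B : Partite A β) :
    ∃ (γ : Type) (_ : Fintype γ) (C : Partite A γ),
      (∀ χ : (Fin a → γ) → Fin 2, ∃ e : β → γ, PartiteEmb B C e ∧
        ∀ g1 g2 : Fin a → β, PartiteCopy A B g1 → PartiteCopy A B g2 →
          χ (fun p => e (g1 p)) = χ (fun p => e (g2 p))) ∧
      ((∀ S : Set β, IrredSub B.str S → Set.InjOn B.part S) →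
        ∀ S : Set γ, IrredSub C.str S → Set.InjOn C.part S) := by
  obtain ⟨N, hN, hHJ⟩ := Combinatorics.Line.exists_mono_in_high_dimension_fin
    (PartiteCopies A B) (Fin 2)
  refine ⟨PowV B N, inferInstance, powPartite B N hN, fun χ => ?_,
    fun hB _ => injOn_powPart_of_irredSub hB hN⟩
  obtain ⟨l, hl⟩ := hHJ fun f => χ (PowV.ofCopies f)
  exact exists_partiteEmb_const_on_copies hN hl
end
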